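/- Let (A₀,A₁), (B₀,B₁), (C₀,C₁) be ordered Banach couples (A₁ ⊂ A₀ with norm-1 inclusion, and similarly for B and C), mutually closed. Suppose a bilinear operator T satisfies K(t, T(f,g); C⃗) ≤ c ∫₀^∞ K(t/u, f; A⃗) K(u, g; B⃗) du/u for all t > 0. Then for all f ∈ A₁, g ∈ B₁ and all 0 < t < 1: K(t, T(f,g); C⃗) ≤ c' t (1 + log(1/t)) ‖f‖_{A₁} ‖g‖_{B₁}, i.e. T maps A₁ × B₁ boundedly into the space Exp(C⃗) = { h : sup_{0<t<1} K(t,h;C⃗)/(t(1+log(1/t))) < ∞ }. -/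

import Mathlib

/-!
For an ordered couple with norm-one inclusion, `K(s, f) ≤ min(1, s) ‖f‖₁` (take the splitting
`f = f + 0` or `f = 0 + f`). Hence the hypothesis bounds `K(t, T(f, g))` by `c ‖f‖₁ ‖g‖₁` times
`∫₀^∞ min(1, t/u) min(1, u) du/u`. For `t ≤ 1`, splitting at `u = t` and `u = 1`, the integrand is
at most `1`, `t/u` and `t/u²` on the three pieces, which contribute `t`, `t log(1/t)` and `t`.
-/

open Set ENNReal MeasureTheory

structure IsENorm {E : Type*} [AddCommGroup E] (N : E → ℝ≥0∞) : Prop where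
  map_zero : N 0 = 0
  add_le : ∀ x y : E, N (x + y) ≤ N x + N y
  neg_eq : ∀ x : E, N (-x) = N x

noncomputable def Kfun {E : Type*} [AddCommGroup E] (N₀ N₁ : E → ℝ≥0∞) (t : ℝ) (f : E) : ℝ≥0∞ :=
  ⨅ g : E, N₀ g + ENNReal.ofReal t * N₁ (f - g)

section Kfun

variable {E : Type*} [AddCommGroup E] {N₀ N₁ : E → ℝ≥0∞}

lemma Kfun_le_left (h₁ : N₁ 0 = 0) (s : ℝ) (f : E) : Kfun N₀ N₁ s f ≤ N₀ f :=
  (iInf_le _ f).trans (by simp [h₁])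

lemma Kfun_le_ofReal_mul (h₀ : N₀ 0 = 0) (s : ℝ) (f : E) :
    Kfun N₀ N₁ s f ≤ ENNReal.ofReal s * N₁ f :=
  (iInf_le _ 0).trans (by simp [h₀])

lemma Kfun_le_min_mul (h₀ : N₀ 0 = 0) (h₁ : N₁ 0 = 0) (s : ℝ) {f : E} (hf : N₀ f ≤ N₁ f) :
    Kfun N₀ N₁ s f ≤ min 1 (ENNReal.ofReal s) * N₁ f := by
  rw [min_mul_of_nonneg _ _ bot_le, one_mul]
  exact le_min ((Kfun_le_left h₁ s f).trans hf) (Kfun_le_ofReal_mul h₀ s f)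

end Kfun

noncomputable def minKernel (t u : ℝ) : ℝ≥0∞ :=
  min 1 (ENNReal.ofReal (t / u)) * min 1 (ENNReal.ofReal u) / ENNReal.ofReal u

section minKernel

variable {t u : ℝ}

lemma measurable_minKernel (t : ℝ) : Measurable (minKernel t) := by
  unfold minKernel; fun_prop

lemma minKernel_le_one (hu : 0 < u) : minKernel t u ≤ 1 :=
  calc minKernel t u ≤ 1 * ENNReal.ofReal u / ENNReal.ofReal u := by
        unfold minKernel; gcongr
        · exact min_le_left _ _
        · exact min_le_right _ _
    _ = 1 := by rw [one_mul, ENNReal.div_self (by simpa using hu) ofReal_ne_top]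

lemma minKernel_le_inv (ht : 0 ≤ t) (hu : 0 < u) :
    minKernel t u ≤ ENNReal.ofReal t * ENNReal.ofReal u⁻¹ :=
  calc minKernel t u ≤ ENNReal.ofReal (t / u) * ENNReal.ofReal u / ENNReal.ofReal u := by
        unfold minKernel; gcongr <;> exact min_le_right _ _
    _ = ENNReal.ofReal t * ENNReal.ofReal u⁻¹ := by
        rw [ENNReal.mul_div_cancel_right (by simpa using hu) ofReal_ne_top, div_eq_mul_inv,
          ENNReal.ofReal_mul ht]

lemma minKernel_le_rpow (ht : 0 ≤ t) (hu : 0 < u) :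
    minKernel t u ≤ ENNReal.ofReal t * ENNReal.ofReal (u ^ (-2 : ℝ)) :=
  calc minKernel t u ≤ ENNReal.ofReal (t / u) * 1 / ENNReal.ofReal u := by
        unfold minKernel; gcongr
        · exact min_le_right _ _
        · exact min_le_left _ _
    _ = ENNReal.ofReal t * ENNReal.ofReal (u ^ (-2 : ℝ)) := by
        rw [mul_one, ← ENNReal.ofReal_div_of_pos hu, ← ENNReal.ofReal_mul ht]
        congr 1
        rw [Real.rpow_neg hu.le, Real.rpow_two]; field_simp

end minKernel

lemma lintegral_Ioc_ofReal_inv {a b : ℝ} (ha : 0 < a) (hab : a ≤ b) :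
    ∫⁻ u in Ioc a b, ENNReal.ofReal u⁻¹ = ENNReal.ofReal (Real.log (b / a)) := by
  have hpos : ∀ u ∈ Icc a b, 0 < u := fun u hu => ha.trans_le hu.1
  have hint : IntegrableOn (fun u : ℝ => u⁻¹) (Ioc a b) :=
    (continuousOn_inv₀.mono fun u hu => (hpos u hu).ne').integrableOn_Icc.mono_set
      Ioc_subset_Icc_self
  rw [← ofReal_integral_eq_lintegral_ofReal hint, ← intervalIntegral.integral_of_le hab,
    integral_inv_of_pos ha (ha.trans_le hab)]
  filter_upwards [ae_restrict_mem measurableSet_Ioc] with u hu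
  exact (inv_pos.2 (hpos u (Ioc_subset_Icc_self hu))).le

lemma lintegral_Ioi_ofReal_rpow {a r : ℝ} (ha : 0 < a) (hr : r < -1) :
    ∫⁻ u in Ioi a, ENNReal.ofReal (u ^ r) = ENNReal.ofReal (-a ^ (r + 1) / (r + 1)) := by
  rw [← ofReal_integral_eq_lintegral_ofReal (integrableOn_Ioi_rpow_of_lt hr ha),
    integral_Ioi_rpow_of_lt hr ha]
  filter_upwards [ae_restrict_mem measurableSet_Ioi] with u hu
  exact Real.rpow_nonneg (ha.trans hu).le r

lemma lintegral_minKernel_le {t : ℝ} (ht₀ : 0 < t) (ht₁ : t ≤ 1) :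
    ∫⁻ u in Ioi 0, minKernel t u ≤ ENNReal.ofReal (t * (2 + Real.log (1 / t))) := by
  have hL : 0 ≤ Real.log (1 / t) := Real.log_nonneg (one_le_one_div ht₀ ht₁)
  calc ∫⁻ u in Ioi 0, minKernel t u
      = ∫⁻ u in Ioc 0 t ∪ (Ioc t 1 ∪ Ioi 1), minKernel t u := by
        rw [Ioc_union_Ioi_eq_Ioi ht₁, Ioc_union_Ioi_eq_Ioi ht₀.le]
    _ ≤ (∫⁻ u in Ioc 0 t, minKernel t u) +
          ((∫⁻ u in Ioc t 1, minKernel t u) + ∫⁻ u in Ioi 1, minKernel t u) :=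
        (lintegral_union_le _ _ _).trans (add_le_add le_rfl (lintegral_union_le _ _ _))
    _ ≤ (∫⁻ u in Ioc 0 t, 1) +
          ((∫⁻ u in Ioc t 1, ENNReal.ofReal t * ENNReal.ofReal u⁻¹) +
            ∫⁻ u in Ioi 1, ENNReal.ofReal t * ENNReal.ofReal (u ^ (-2 : ℝ))) :=
        add_le_add (setLIntegral_mono' measurableSet_Ioc fun u hu => minKernel_le_one hu.1)
          (add_le_add (setLIntegral_mono' measurableSet_Ioc fun u hu =>
              minKernel_le_inv ht₀.le (ht₀.trans hu.1))
            (setLIntegral_mono' measurableSet_Ioi fun u hu =>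
              minKernel_le_rpow ht₀.le (zero_lt_one.trans (mem_Ioi.1 hu))))
    _ = ENNReal.ofReal (t * (2 + Real.log (1 / t))) := by
        rw [setLIntegral_one, Real.volume_Ioc, lintegral_const_mul _ (by fun_prop),
          lintegral_const_mul _ (by fun_prop), lintegral_Ioc_ofReal_inv ht₀ ht₁,
          lintegral_Ioi_ofReal_rpow zero_lt_one (by norm_num), ← ENNReal.ofReal_mul ht₀.le,
          ← ENNReal.ofReal_mul ht₀.le, ← ENNReal.ofReal_add (by positivity) (by positivity),
          ← ENNReal.ofReal_add (by positivity) (by positivity)]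
        congr 1
        ring_nf

lemma Kfun_mul_Kfun_div_le_minKernel {E F : Type*} [AddCommGroup E] [AddCommGroup F]
    {N₀ N₁ : E → ℝ≥0∞} {M₀ M₁ : F → ℝ≥0∞} (hN₀ : N₀ 0 = 0) (hN₁ : N₁ 0 = 0)
    (hM₀ : M₀ 0 = 0) (hM₁ : M₁ 0 = 0) {f : E} {g : F} (hf : N₀ f ≤ N₁ f) (hg : M₀ g ≤ M₁ g)
    (t u : ℝ) :
    Kfun N₀ N₁ (t / u) f * Kfun M₀ M₁ u g / ENNReal.ofReal u ≤ minKernel t u * (N₁ f * M₁ g) :=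
  calc Kfun N₀ N₁ (t / u) f * Kfun M₀ M₁ u g / ENNReal.ofReal u
      ≤ min 1 (ENNReal.ofReal (t / u)) * N₁ f * (min 1 (ENNReal.ofReal u) * M₁ g)
          / ENNReal.ofReal u := by
        gcongr
        · exact Kfun_le_min_mul hN₀ hN₁ _ hf
        · exact Kfun_le_min_mul hM₀ hM₁ _ hg
    _ = minKernel t u * (N₁ f * M₁ g) := by
        simp only [minKernel, div_eq_mul_inv]; ring

theorem bilinear_into_Exp_general {EA EB EC : Type*}
    [AddCommGroup EA] [AddCommGroup EB]
    [AddCommGroup EC]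
    (NA₀ NA₁ : EA → ℝ≥0∞) (hA₀ : IsENorm NA₀) (hA₁ : IsENorm NA₁)
    (NB₀ NB₁ : EB → ℝ≥0∞) (hB₀ : IsENorm NB₀) (hB₁ : IsENorm NB₁)
    (NC₀ NC₁ : EC → ℝ≥0∞)
    (hordA : ∀ x, NA₀ x ≤ NA₁ x) (hordB : ∀ x, NB₀ x ≤ NB₁ x)
    (T : EA → EB → EC) (c : ℝ) (hc : 0 < c)
    (hT : ∀ (f : EA) (g : EB) (t : ℝ), 0 < t →
      Kfun NC₀ NC₁ t (T f g)
        ≤ ENNReal.ofReal c *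
            ∫⁻ u in Set.Ioi (0:ℝ), Kfun NA₀ NA₁ (t / u) f * Kfun NB₀ NB₁ u g
              / ENNReal.ofReal u) :
    ∃ C : ℝ, 0 < C ∧ ∀ (f : EA) (g : EB), ∀ t ∈ Set.Ioo (0:ℝ) 1,
      Kfun NC₀ NC₁ t (T f g)
        ≤ ENNReal.ofReal (C * (t * (1 + Real.log (1 / t)))) * (NA₁ f * NB₁ g) := by
  refine ⟨2 * c, by positivity, fun f g t ⟨ht₀, ht₁⟩ => ?_⟩
  have hL : 0 ≤ Real.log (1 / t) := Real.log_nonneg (one_le_one_div ht₀ ht₁.le)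
  calc Kfun NC₀ NC₁ t (T f g)
      ≤ ENNReal.ofReal c * ∫⁻ u in Ioi 0, minKernel t u * (NA₁ f * NB₁ g) :=
        (hT f g t ht₀).trans <| by
          gcongr ENNReal.ofReal c * ?_
          exact setLIntegral_mono' measurableSet_Ioi fun u _ =>
            Kfun_mul_Kfun_div_le_minKernel hA₀.map_zero hA₁.map_zero hB₀.map_zero hB₁.map_zero
              (hordA f) (hordB g) t u
    _ ≤ ENNReal.ofReal c * (ENNReal.ofReal (t * (2 + Real.log (1 / t))) * (NA₁ f * NB₁ g)) := by
        rw [lintegral_mul_const _ (measurable_minKernel t)]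
        gcongr
        exact lintegral_minKernel_le ht₀ ht₁.le
    _ ≤ ENNReal.ofReal (2 * c * (t * (1 + Real.log (1 / t)))) * (NA₁ f * NB₁ g) := by
        rw [← mul_assoc, ← ENNReal.ofReal_mul hc.le]
        gcongr ENNReal.ofReal ?_ * _
        nlinarith [mul_nonneg (mul_nonneg hc.le ht₀.le) hL]

/-- If the three couples are ordered (norm-one inclusion `X₁ ⊆ X₀`) and the bilinear operator
satisfies `K(t, T(f,g); C⃗) ≤ c ∫₀^∞ K(t/u, f; A⃗) K(u, g; B⃗) du/u`, then for `f ∈ A₁`,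
`g ∈ B₁`, and `0 < t < 1`, `K(t, T(f,g); C⃗) ≤ c' t (1 + log(1/t)) ‖f‖_{A₁} ‖g‖_{B₁}`;
i.e. `T : A₁ × B₁ → Exp(C⃗)` boundedly. -/
theorem bilinear_into_Exp {EA EB EC : Type*}
    [AddCommGroup EA] [Module ℝ EA] [AddCommGroup EB] [Module ℝ EB]
    [AddCommGroup EC] [Module ℝ EC]
    (NA₀ NA₁ : EA → ℝ≥0∞) (hA₀ : IsENorm NA₀) (hA₁ : IsENorm NA₁)
    (NB₀ NB₁ : EB → ℝ≥0∞) (hB₀ : IsENorm NB₀) (hB₁ : IsENorm NB₁)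
    (NC₀ NC₁ : EC → ℝ≥0∞) (hC₀ : IsENorm NC₀) (hC₁ : IsENorm NC₁)
    (hordA : ∀ x, NA₀ x ≤ NA₁ x) (hordB : ∀ x, NB₀ x ≤ NB₁ x) (hordC : ∀ x, NC₀ x ≤ NC₁ x)
    (T : EA → EB → EC) (c : ℝ) (hc : 0 < c)
    (hT : ∀ (f : EA) (g : EB) (t : ℝ), 0 < t →
      Kfun NC₀ NC₁ t (T f g)
        ≤ ENNReal.ofReal c *
            ∫⁻ u in Set.Ioi (0:ℝ), Kfun NA₀ NA₁ (t / u) f * Kfun NB₀ NB₁ u g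
              / ENNReal.ofReal u) :
    ∃ C : ℝ, 0 < C ∧ ∀ (f : EA) (g : EB), ∀ t ∈ Set.Ioo (0:ℝ) 1,
      Kfun NC₀ NC₁ t (T f g)
        ≤ ENNReal.ofReal (C * (t * (1 + Real.log (1 / t)))) * (NA₁ f * NB₁ g) :=
  bilinear_into_Exp_general NA₀ NA₁ hA₀ hA₁ NB₀ NB₁ hB₀ hB₁ NC₀ NC₁ hordA hordB T c hc hT
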